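/- arXiv:1001.1802 — 2 statements merged into one kernel-verified Lean document; each statement's English description precedes it below -/
import Mathlib

section
/- (Well-definedness of the Generalized Fusion Discrete Logarithm.) For every 𝗀 : Fin n → G with 𝗀 ≠ (fun _ => 1) and every 𝘆 : Fin n → G, there exists a unique x : F such that E 𝗀 x = 𝘆. -/
/-!
Fix `j₀` with `𝗀 j₀ ≠ 1`; then `g := 𝗀 j₀` has order `q`, so `c ↦ g ^ c.val` identifies `ZMod q`
with `G` and `𝗀 j = g ^ (c j).val` for some nonzero `c : Fin n → ZMod q`. Collecting exponents,
`(E 𝗀 y) i = g ^ (B.repr (w * y) i).val` with `w = ∑ j, c j • ϑ ^ j ≠ 0`, so `E 𝗀` is the composite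
of multiplication by `w` in the field `F`, the coordinate map of `B` and the identification
`ZMod q ≃ G` in each coordinate — a bijection.
-/

open Function

section PowVal

variable {M : Type*} {q : ℕ}

theorem pow_mod_of_pow_eq_one [Monoid M] {g : M} (hg : g ^ q = 1) (k : ℕ) :
    g ^ (k % q) = g ^ k := by
  rw [← pow_mod_orderOf, ← pow_mod_orderOf g k,
    Nat.mod_mod_of_dvd _ (orderOf_dvd_of_pow_eq_one hg)]

theorem pow_val_natCast_of_pow_eq_one [Monoid M] {g : M} (hg : g ^ q = 1) (k : ℕ) :
    g ^ (k : ZMod q).val = g ^ k := by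
  rw [ZMod.val_natCast, pow_mod_of_pow_eq_one hg]

theorem prod_pow_val_pow_val [CommMonoid M] [NeZero q] {ι : Type*} [Fintype ι] {g : M} (hg : g ^ q = 1)
    (c a : ι → ZMod q) :
    ∏ j, (g ^ (c j).val) ^ (a j).val = g ^ (∑ j, c j * a j).val := by
  have hcast : ∑ j, c j * a j = ((∑ j, (c j).val * (a j).val : ℕ) : ZMod q) := by
    push_cast
    simp only [ZMod.natCast_zmod_val]
  simp only [hcast, pow_val_natCast_of_pow_eq_one hg, ← pow_mul, Finset.prod_pow_eq_pow_sum]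

theorem bijective_pow_val [Monoid M] [Fintype M] [NeZero q] {g : M} (hg : orderOf g = q)
    (hcard : Fintype.card M = q) : Bijective fun c : ZMod q => g ^ c.val := by
  have hinj : Injective fun c : ZMod q => g ^ c.val := by
    intro a b (hab : g ^ a.val = g ^ b.val)
    rw [(orderOf_pos_iff.mp (hg ▸ NeZero.pos q)).pow_eq_pow_iff_modEq, hg] at hab
    rw [← ZMod.natCast_zmod_val a, ← ZMod.natCast_zmod_val b]
    exact (ZMod.natCast_eq_natCast_iff _ _ _).mpr hab
  exact (Fintype.bijective_iff_injective_and_card _).mpr ⟨hinj, by rw [ZMod.card, hcard]⟩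

end PowVal

theorem Module.Basis.sum_mul_repr_mul {R A ι : Type*} [CommSemiring R] [Semiring A] [Algebra R A]
    [Fintype ι] (B : Module.Basis ι R A) (c : ι → R) (v : ι → A) (y : A) (i : ι) :
    ∑ j, c j * B.repr (v j * y) i = B.repr ((∑ j, c j • v j) * y) i := by
  simp [Finset.sum_mul, Finsupp.finsetSum_apply]

theorem Module.Basis.bijective_comp_equivFun_mul {R K ι X : Type*} [CommSemiring R] [DivisionRing K]
    [Module R K] [Finite ι] (B : Module.Basis ι R K) {φ : R → X} (hφ : Bijective φ) {w : K}
    (hw : w ≠ 0) : Bijective fun y i => φ (B.equivFun (w * y) i) :=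
  (Bijective.piMap fun _ => hφ).comp (B.equivFun.bijective.comp (mulLeft_bijective₀ w hw))

theorem fusionDlog_existsUnique_general
    {q n : ℕ} (hq : Nat.Prime q)
    {G : Type*} [CommGroup G] [Fintype G] (hcard : Fintype.card G = q)
    (f : Polynomial (ZMod q)) (hirr : Irreducible f)
    (B : Module.Basis (Fin n) (ZMod q) (AdjoinRoot f))
    (hB : ∀ i : Fin n, B i = AdjoinRoot.root f ^ (i : ℕ))
    (E : (Fin n → G) → AdjoinRoot f → (Fin n → G))
    (hE : ∀ (gg : Fin n → G) (y : AdjoinRoot f) (i : Fin n),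
      E gg y i = ∏ j : Fin n, gg j ^ (B.repr (AdjoinRoot.root f ^ (j : ℕ) * y) i).val) :
    ∀ (gg : Fin n → G), gg ≠ (fun _ => 1) →
      ∀ yy : Fin n → G, ∃! x : AdjoinRoot f, E gg x = yy := by
  intro gg hgg yy
  have : Fact q.Prime := ⟨hq⟩
  have : Fact (Irreducible f) := ⟨hirr⟩
  obtain ⟨j₀, hj₀⟩ := ne_iff.mp hgg
  obtain ⟨g, hord⟩ : ∃ g : G, orderOf g = q :=
    ⟨gg j₀, orderOf_eq_prime (hcard ▸ pow_card_eq_one) hj₀⟩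
  have hφ := bijective_pow_val hord hcard
  choose c hc using fun j => hφ.surjective (gg j)
  have hc₀ : c ≠ 0 := by
    rintro rfl
    exact hgg (funext fun j => by simp [← hc j])
  have hw : B.equivFun.symm c ≠ 0 := (LinearEquiv.map_ne_zero_iff _).mpr hc₀
  have hE' : E gg = fun y i => g ^ (B.equivFun (B.equivFun.symm c * y) i).val := by
    funext y i
    simp only [hE, ← hc]
    rw [prod_pow_val_pow_val (hord ▸ pow_orderOf_eq_one _), B.sum_mul_repr_mul,
      Module.Basis.equivFun_symm_apply, Module.Basis.equivFun_apply]
    simp only [hB]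
  exact (hE' ▸ B.bijective_comp_equivFun_mul hφ hw).existsUnique yy

/-- Well-definedness of the Generalized Fusion Discrete Logarithm: for every base
`gg ≠ (1,…,1)` and every `yy`, there is exactly one `x` with `E gg x = yy`. -/
theorem fusionDlog_existsUnique
    {q n : ℕ} (hq : Nat.Prime q) (hn : 1 ≤ n)
    {G : Type*} [CommGroup G] [Fintype G] (hcard : Fintype.card G = q)
    (f : Polynomial (ZMod q)) (hmonic : f.Monic) (hirr : Irreducible f)
    (hdeg : f.natDegree = n)
    (B : Module.Basis (Fin n) (ZMod q) (AdjoinRoot f))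
    (hB : ∀ i : Fin n, B i = AdjoinRoot.root f ^ (i : ℕ))
    (E : (Fin n → G) → AdjoinRoot f → (Fin n → G))
    (hE : ∀ (gg : Fin n → G) (y : AdjoinRoot f) (i : Fin n),
      E gg y i = ∏ j : Fin n, gg j ^ (B.repr (AdjoinRoot.root f ^ (j : ℕ) * y) i).val) :
    ∀ (gg : Fin n → G), gg ≠ (fun _ => 1) →
      ∀ yy : Fin n → G, ∃! x : AdjoinRoot f, E gg x = yy :=
  fusionDlog_existsUnique_general hq hcard f hirr B hB E hE
end

section
/- (Key identity in the reduction n-FDLP ≤ DLP of Theorem 3.) For all w z : F with w ≠ 0, one has E (Φ w) (z * w⁻¹) = Φ z; consequently the unique fusion discrete logarithm of Φ z to the base Φ w is z * w⁻¹. -/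
/-! Writing `Φ x = (g ^ xᵢ)ᵢ` for the coordinates `xᵢ` of `x` in the basis `B`, the exponent of the
`i`-th coordinate of `E (Φ w) y` is `∑ⱼ wⱼ · (B.repr (ϑ ^ j * y))ᵢ = (B.repr (w * y))ᵢ`, because
`w * y = ∑ⱼ wⱼ • ϑ ^ j * y`. Hence `E (Φ w) y = Φ (w * y)`, and since `g` has order `q` the map `Φ`
is injective, so `E (Φ w) y = Φ z` holds exactly when `y = z * w⁻¹`. -/

open Module

theorem Module.Basis.repr_mul_apply {ι R A : Type*} [Fintype ι] [CommSemiring R] [Semiring A]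
    [Algebra R A] (B : Basis ι R A) (w y : A) (i : ι) :
    B.repr (w * y) i = ∑ j, B.repr w j * B.repr (B j * y) i := by
  conv_lhs => rw [← B.sum_repr w]
  simp only [Finset.sum_mul, smul_mul_assoc, map_sum, map_smul, Finsupp.finsetSum_apply,
    Finsupp.smul_apply, smul_eq_mul]

section PowVal

variable {G : Type*} {q : ℕ}

theorem pow_val_natCast [Monoid G] {g : G} (hg : g ^ q = 1) (N : ℕ) :
    g ^ (N : ZMod q).val = g ^ N := by
  rw [ZMod.val_natCast]
  conv_rhs => rw [← Nat.mod_add_div N q, pow_add, pow_mul, hg, one_pow, mul_one]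

theorem pow_val_mul [Monoid G] {g : G} (hg : g ^ q = 1) (a b : ZMod q) :
    g ^ (a * b).val = (g ^ a.val) ^ b.val := by
  rw [ZMod.val_mul, ← ZMod.val_natCast, pow_val_natCast hg, pow_mul]

theorem pow_val_sum [CommMonoid G] [NeZero q] {g : G} (hg : g ^ q = 1) {ι : Type*} (s : Finset ι)
    (a : ι → ZMod q) : g ^ (∑ i ∈ s, a i).val = ∏ i ∈ s, g ^ (a i).val := by
  rw [Finset.prod_pow_eq_pow_sum, ← pow_val_natCast hg (∑ i ∈ s, _), Nat.cast_sum]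
  simp only [ZMod.natCast_zmod_val]

theorem pow_val_injective [Monoid G] [NeZero q] {g : G} (hg : orderOf g = q) :
    Function.Injective fun a : ZMod q => g ^ a.val := fun a b hab =>
  ZMod.val_injective q <|
    pow_injOn_Iio_orderOf (by simpa [hg] using ZMod.val_lt a) (by simpa [hg] using ZMod.val_lt b) hab

end PowVal

section FusionExp

variable {ι A G : Type*} {q : ℕ} [Semiring A] [Algebra (ZMod q) A] [CommMonoid G]
  (B : Basis ι (ZMod q) A)

/-- The coordinatewise exponential `Φ`. -/
noncomputable def basisExp (g : G) (x : A) (i : ι) : G :=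
  g ^ (B.repr x i).val

theorem basisExp_injective [NeZero q] {g : G} (hg : orderOf g = q) :
    Function.Injective (basisExp B g) := fun _ _ hxy =>
  B.repr.injective <| Finsupp.ext fun i => pow_val_injective hg (congrFun hxy i)

variable [Fintype ι]

/-- The generalized fusion exponential, with `B j` in place of `ϑ ^ j`. -/
noncomputable def fusionExp (gg : ι → G) (y : A) (i : ι) : G :=
  ∏ j, gg j ^ (B.repr (B j * y) i).val

theorem fusionExp_basisExp [NeZero q] {g : G} (hg : g ^ q = 1) (w y : A) :
    fusionExp B (basisExp B g w) y = basisExp B g (w * y) := by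
  funext i
  rw [fusionExp, basisExp, B.repr_mul_apply, pow_val_sum hg]
  exact Finset.prod_congr rfl fun j _ => (pow_val_mul hg _ _).symm

end FusionExp

theorem fusionDlog_reduction_identity_general
    {q n : ℕ} [Fact (Nat.Prime q)]
    {G : Type*} [CommGroup G] [Fintype G] (hcard : Fintype.card G = q)
    (f : Polynomial (ZMod q)) [Fact (Irreducible f)]
    (B : Module.Basis (Fin n) (ZMod q) (AdjoinRoot f))
    (hB : ∀ i : Fin n, B i = AdjoinRoot.root f ^ (i : ℕ))
    (E : (Fin n → G) → AdjoinRoot f → (Fin n → G))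
    (hE : ∀ (gg : Fin n → G) (y : AdjoinRoot f) (i : Fin n),
      E gg y i = ∏ j : Fin n, gg j ^ (B.repr (AdjoinRoot.root f ^ (j : ℕ) * y) i).val)
    (g : G) (hg : ∀ h : G, ∃ k : ℕ, h = g ^ k)
    (Φ : AdjoinRoot f → (Fin n → G))
    (hΦ : ∀ (x : AdjoinRoot f) (i : Fin n), Φ x i = g ^ (B.repr x i).val) :
    ∀ w z : AdjoinRoot f, w ≠ 0 →
      E (Φ w) (z * w⁻¹) = Φ z ∧
      ∀ x : AdjoinRoot f, E (Φ w) x = Φ z → x = z * w⁻¹ := by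
  obtain rfl : E = fusionExp B := by
    funext gg y i
    simp only [hE, fusionExp, hB]
  obtain rfl : Φ = basisExp B g := by
    funext x i
    exact hΦ x i
  have hgq : g ^ q = 1 := hcard ▸ pow_card_eq_one
  have hord : orderOf g = q := by
    rw [← hcard, ← Nat.card_eq_fintype_card]
    refine orderOf_eq_card_of_forall_mem_zpowers fun h => ?_
    obtain ⟨k, rfl⟩ := hg h
    exact Subgroup.npow_mem_zpowers g k
  intro w z hw
  simp only [fusionExp_basisExp B hgq]
  refine ⟨by rw [mul_comm z, mul_inv_cancel_left₀ hw], fun x hx => ?_⟩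
  rw [← basisExp_injective B hord hx]
  field_simp

/-- Key identity in the reduction n-FDLP ≤ DLP (Theorem 3): for `w ≠ 0`,
`E (Φ w) (z * w⁻¹) = Φ z`, and `z * w⁻¹` is the unique fusion discrete logarithm
of `Φ z` to the base `Φ w`. -/
theorem fusionDlog_reduction_identity
    {q n : ℕ} [Fact (Nat.Prime q)] (hn : 1 ≤ n)
    {G : Type*} [CommGroup G] [Fintype G] (hcard : Fintype.card G = q)
    (f : Polynomial (ZMod q)) (hmonic : f.Monic) [Fact (Irreducible f)]
    (hdeg : f.natDegree = n)
    (B : Module.Basis (Fin n) (ZMod q) (AdjoinRoot f))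
    (hB : ∀ i : Fin n, B i = AdjoinRoot.root f ^ (i : ℕ))
    (E : (Fin n → G) → AdjoinRoot f → (Fin n → G))
    (hE : ∀ (gg : Fin n → G) (y : AdjoinRoot f) (i : Fin n),
      E gg y i = ∏ j : Fin n, gg j ^ (B.repr (AdjoinRoot.root f ^ (j : ℕ) * y) i).val)
    (g : G) (hg : ∀ h : G, ∃ k : ℕ, h = g ^ k)
    (Φ : AdjoinRoot f → (Fin n → G))
    (hΦ : ∀ (x : AdjoinRoot f) (i : Fin n), Φ x i = g ^ (B.repr x i).val) :
    ∀ w z : AdjoinRoot f, w ≠ 0 →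
      E (Φ w) (z * w⁻¹) = Φ z ∧
      ∀ x : AdjoinRoot f, E (Φ w) x = Φ z → x = z * w⁻¹ :=
  fusionDlog_reduction_identity_general hcard f B hB E hE g hg Φ hΦ
end
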